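/- Let r : ℕ → ℝ be defined by r₁ = 0 and r_{k+1} = (1+r_k)²/4. Let Ω ⊆ ℝ^s be open, fix i ∈ {1,…,s}, let q > 0 be real, and let K, L be compact sets with K ⊆ interior(L) and L ⊆ Ω. Let c : (0,1] × Ω → ℝ be such that for each ε the map x ↦ c(ε,x) has partial derivatives ∂_i^m c of all orders m in the i-th coordinate direction. If sup_{x∈L} |c(ε,x)| = O(ε^q) and sup_{x∈L} |∂_i^m c(ε,x)| = O(1) as ε → 0⁺ for every m ∈ ℕ, then for every k ∈ ℕ, sup_{x∈K} |∂_i c(ε,x)| = O(ε^{(1+r_k)q/2}) as ε → 0⁺. -/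

import Mathlib

/-!
Landau's inequality: if `|f| ≤ A` and `|f''| ≤ B` on `[t, t + h]`, the mean value theorem applied
to `f` and to `f'` gives `|f' t| ≤ 2A/h + hB`. For `A ~ ε^a`, `B ~ ε^b` with `b ≤ a`, the step
`h ~ ε^((a-b)/2)` yields `f' = O(ε^((a+b)/2))`. Starting from `b = 0` (all derivatives bounded),
the first derivative of anything that is `O(ε^a)` is `O(ε^(a/2))`. If level `k` gives the exponent
`(1 + r_k) a / 2` for the first derivative, applying it twice gives `(1 + r_k)² a / 4 = r_{k+1} a`
for the second, and Landau's inequality then yields `(1 + r_{k+1}) a / 2`. Every application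
shrinks the compact set, so the induction runs over all compact `K ⊆ interior L'`.
-/

open Set

def IsBigOPowOn {E : Type*} (f : ℝ → E → ℝ) (S : Set E) (a : ℝ) : Prop :=
  ∃ C > (0:ℝ), ∃ ε₀ ∈ Ioc (0:ℝ) 1, ∀ ε ∈ Ioo (0:ℝ) ε₀, ∀ x ∈ S, |f ε x| ≤ C * ε ^ a

namespace IsBigOPowOn

variable {E : Type*} {f : ℝ → E → ℝ} {S T : Set E} {a : ℝ}

theorem mono (hf : IsBigOPowOn f S a) (hTS : T ⊆ S) : IsBigOPowOn f T a := by
  obtain ⟨C, hC, ε₀, hε₀, hf⟩ := hf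
  exact ⟨C, hC, ε₀, hε₀, fun ε hε x hx => hf ε hε x (hTS hx)⟩

theorem zero_iff :
    IsBigOPowOn f S 0 ↔
      ∃ C > (0:ℝ), ∃ ε₀ ∈ Ioc (0:ℝ) 1, ∀ ε ∈ Ioo (0:ℝ) ε₀, ∀ x ∈ S, |f ε x| ≤ C := by
  simp only [IsBigOPowOn, Real.rpow_zero, mul_one]

end IsBigOPowOn

theorem abs_deriv_le_of_abs_le_of_abs_deriv2_le {f f' f'' : ℝ → ℝ} {t h A B : ℝ} (hh : 0 < h)
    (hf : ∀ u ∈ Icc t (t + h), HasDerivAt f (f' u) u)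
    (hf' : ∀ u ∈ Icc t (t + h), HasDerivAt f' (f'' u) u)
    (hA : ∀ u ∈ Icc t (t + h), |f u| ≤ A) (hB : ∀ u ∈ Icc t (t + h), |f'' u| ≤ B) :
    |f' t| ≤ 2 * A / h + h * B := by
  have hlt : t < t + h := by linarith
  obtain ⟨ξ, hξ, hslope⟩ := exists_hasDerivAt_eq_slope f f' hlt
    (fun u hu => (hf u hu).continuousAt.continuousWithinAt)
    (fun u hu => hf u (Ioo_subset_Icc_self hu))
  have hξ_slope : |f' ξ| ≤ 2 * A / h := by
    rw [hslope, add_sub_cancel_left, abs_div, abs_of_pos hh]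
    gcongr
    calc |f (t + h) - f t| ≤ |f (t + h)| + |f t| := abs_sub _ _
      _ ≤ A + A := add_le_add (hA _ (right_mem_Icc.2 hlt.le)) (hA _ (left_mem_Icc.2 hlt.le))
      _ = 2 * A := by ring
  have hξ_t : |f' ξ - f' t| ≤ B * (ξ - t) :=
    norm_image_sub_le_of_norm_deriv_le_segment' (fun u hu => (hf' u hu).hasDerivWithinAt)
      (fun u hu => hB u (Ico_subset_Icc_self hu)) ξ (Ioo_subset_Icc_self hξ)
  calc |f' t| ≤ |f' ξ| + |f' ξ - f' t| := by
        linarith [abs_sub_abs_le_abs_sub (f' t) (f' ξ), abs_sub_comm (f' t) (f' ξ)]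
    _ ≤ 2 * A / h + B * (ξ - t) := add_le_add hξ_slope hξ_t
    _ ≤ 2 * A / h + h * B := by
        have hB0 : 0 ≤ B := (abs_nonneg _).trans (hB t (left_mem_Icc.2 hlt.le))
        nlinarith [hξ.2]

theorem landau_seq_mem_Icc {r : ℕ → ℝ} (hr1 : r 1 = 0)
    (hrec : ∀ k : ℕ, 1 ≤ k → r (k + 1) = (1 + r k) ^ 2 / 4) {k : ℕ} (hk : 1 ≤ k) :
    r k ∈ Icc 0 1 := by
  induction k, hk using Nat.le_induction with
  | base => simp [hr1]
  | succ n hn ih =>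
    rw [hrec n hn]
    exact ⟨by positivity, by nlinarith [ih.1, ih.2]⟩

section Landau

variable {ι : Type*} [Fintype ι] [DecidableEq ι]

theorem dist_update_self_le (x : ι → ℝ) (i : ι) (u : ℝ) :
    dist (Function.update x i u) x ≤ dist u (x i) := by
  refine (dist_pi_le_iff dist_nonneg).2 fun j => ?_
  rcases eq_or_ne j i with rfl | hj
  · simp
  · simp [Function.update_of_ne hj]

theorem IsCompact.exists_update_mem {K L : Set (ι → ℝ)} (hK : IsCompact K)
    (hKL : K ⊆ interior L) (i : ι) :
    ∃ δ > 0, ∀ x ∈ K, ∀ u ∈ Icc (x i) (x i + δ), Function.update x i u ∈ L := by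
  obtain ⟨δ, hδ, hthick⟩ := hK.exists_thickening_subset_open isOpen_interior hKL
  refine ⟨δ / 2, by positivity, fun x hx u hu => interior_subset (hthick ?_)⟩
  refine Metric.mem_thickening_iff.2 ⟨x, hx, (dist_update_self_le x i u).trans_lt ?_⟩
  rw [Real.dist_eq, abs_of_nonneg (by linarith [hu.1])]
  linarith [hu.2]

theorem IsBigOPowOn.landau_step {i : ι} {f f' f'' : ℝ → (ι → ℝ) → ℝ} {K L : Set (ι → ℝ)} {a b : ℝ}
    (hK : IsCompact K) (hKL : K ⊆ interior L) (hba : b ≤ a)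
    (hf : ∀ ε ∈ Ioc (0:ℝ) 1, ∀ x ∈ L,
      HasDerivAt (fun t => f ε (Function.update x i t)) (f' ε x) (x i))
    (hf' : ∀ ε ∈ Ioc (0:ℝ) 1, ∀ x ∈ L,
      HasDerivAt (fun t => f' ε (Function.update x i t)) (f'' ε x) (x i))
    (hfa : IsBigOPowOn f L a) (hfb : IsBigOPowOn f'' L b) :
    IsBigOPowOn f' K ((a + b) / 2) := by
  obtain ⟨Ca, hCa, εa, hεa, hfa⟩ := hfa
  obtain ⟨Cb, hCb, εb, hεb, hfb⟩ := hfb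
  obtain ⟨δ, hδ, hseg⟩ := hK.exists_update_mem hKL i
  refine ⟨2 * Ca / δ + Cb * δ, by positivity, min εa εb, ⟨lt_min hεa.1 hεb.1,
    (min_le_left _ _).trans hεa.2⟩, fun ε hε x hx => ?_⟩
  have hε_pos : 0 < ε := hε.1
  have hε_a : ε ∈ Ioo 0 εa := ⟨hε_pos, hε.2.trans_le (min_le_left _ _)⟩
  have hε_b : ε ∈ Ioo 0 εb := ⟨hε_pos, hε.2.trans_le (min_le_right _ _)⟩
  have hε_Ioc : ε ∈ Ioc 0 1 := ⟨hε_pos, hε_a.2.le.trans hεa.2⟩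
  -- the step length that balances the two error terms
  set h := δ * ε ^ ((a - b) / 2) with h_def
  have hh : 0 < h := by positivity
  have hhδ : h ≤ δ :=
    mul_le_of_le_one_right hδ.le (Real.rpow_le_one hε_pos.le hε_Ioc.2 (by linarith))
  have hsegL : ∀ u ∈ Icc (x i) (x i + h), Function.update x i u ∈ L :=
    fun u hu => hseg x hx u ⟨hu.1, hu.2.trans (by linarith)⟩
  have hslice : ∀ (g g' : ℝ → (ι → ℝ) → ℝ), (∀ ε ∈ Ioc (0:ℝ) 1, ∀ x ∈ L,
      HasDerivAt (fun t => g ε (Function.update x i t)) (g' ε x) (x i)) →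
      ∀ u ∈ Icc (x i) (x i + h), HasDerivAt (fun t => g ε (Function.update x i t))
        (g' ε (Function.update x i u)) u := by
    intro g g' hg u hu
    simpa using hg ε hε_Ioc _ (hsegL u hu)
  have hlandau := abs_deriv_le_of_abs_le_of_abs_deriv2_le hh (hslice f f' hf) (hslice f' f'' hf')
    (fun u hu => hfa ε hε_a _ (hsegL u hu)) (fun u hu => hfb ε hε_b _ (hsegL u hu))
  simp only [Function.update_eq_self] at hlandau
  convert hlandau using 1
  have hsplit_a : ε ^ a = ε ^ ((a + b) / 2) * ε ^ ((a - b) / 2) := by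
    rw [← Real.rpow_add hε_pos]; ring_nf
  have hsplit_b : ε ^ b * ε ^ ((a - b) / 2) = ε ^ ((a + b) / 2) := by
    rw [← Real.rpow_add hε_pos]; ring_nf
  rw [h_def, hsplit_a, ← hsplit_b]
  field_simp

theorem IsBigOPowOn.landau_iterate {i : ι} {r : ℕ → ℝ} (hr1 : r 1 = 0)
    (hrec : ∀ k : ℕ, 1 ≤ k → r (k + 1) = (1 + r k) ^ 2 / 4)
    {L : Set (ι → ℝ)} {cm : ℕ → ℝ → (ι → ℝ) → ℝ}
    (hd : ∀ m : ℕ, ∀ ε ∈ Ioc (0:ℝ) 1, ∀ x ∈ L,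
      HasDerivAt (fun t => cm m ε (Function.update x i t)) (cm (m + 1) ε x) (x i))
    (hbd : ∀ m : ℕ, 1 ≤ m → IsBigOPowOn (cm m) L 0) {k : ℕ} (hk : 1 ≤ k) {m : ℕ}
    {K L' : Set (ι → ℝ)} (hK : IsCompact K) (hKL' : K ⊆ interior L') (hL'L : L' ⊆ L)
    {a : ℝ} (ha : 0 ≤ a) (hm : IsBigOPowOn (cm m) L' a) :
    IsBigOPowOn (cm (m + 1)) K ((1 + r k) * a / 2) := by
  induction k, hk using Nat.le_induction generalizing m K L' a with
  | base =>
    simpa [hr1] using hm.landau_step hK hKL' ha (fun ε hε x hx => hd m ε hε x (hL'L hx))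
      (fun ε hε x hx => hd (m + 1) ε hε x (hL'L hx)) ((hbd (m + 2) (by omega)).mono hL'L)
  | succ n hn ih =>
    obtain ⟨hrn0, hrn1⟩ := landau_seq_mem_Icc hr1 hrec hn
    obtain ⟨M₁, hM₁, hKM₁, hM₁L'⟩ := exists_compact_between hK isOpen_interior hKL'
    obtain ⟨M₂, hM₂, hKM₂, hM₂M₁⟩ := exists_compact_between hK isOpen_interior hKM₁
    have hM₁L : M₁ ⊆ L := hM₁L'.trans interior_subset |>.trans hL'L
    have hM₂L' : M₂ ⊆ L' := hM₂M₁.trans interior_subset |>.trans hM₁L' |>.trans interior_subset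
    have hm₁ := ih hM₁ hM₁L' hL'L ha hm
    have hm₂ := ih hM₂ hM₂M₁ hM₁L (by positivity) hm₁
    have hstep := (hm.mono hM₂L').landau_step hK hKM₂ (b := (1 + r n) * ((1 + r n) * a / 2) / 2)
      (by nlinarith [mul_nonneg (mul_nonneg ha (sub_nonneg.2 hrn1)) (by linarith : 0 ≤ 3 + r n)])
      (fun ε hε x hx => hd m ε hε x (hL'L (hM₂L' hx)))
      (fun ε hε x hx => hd (m + 1) ε hε x (hL'L (hM₂L' hx))) hm₂
    convert hstep using 2
    rw [hrec n hn]
    ring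

end Landau

theorem landau_iterated_general {s : ℕ}
    (r : ℕ → ℝ) (hr1 : r 1 = 0) (hrec : ∀ k : ℕ, 1 ≤ k → r (k + 1) = (1 + r k) ^ 2 / 4)
    (Ω : Set (Fin s → ℝ)) (i : Fin s)
    (q : ℝ) (hq : 0 < q)
    (K L : Set (Fin s → ℝ)) (hK : IsCompact K)
    (hKL : K ⊆ interior L) (hLΩ : L ⊆ Ω)
    (cm : ℕ → ℝ → (Fin s → ℝ) → ℝ)
    (hd : ∀ m : ℕ, ∀ ε ∈ Ioc (0:ℝ) 1, ∀ x ∈ Ω,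
      HasDerivAt (fun t => cm m ε (Function.update x i t)) (cm (m + 1) ε x) (x i))
    (h0 : ∃ C > (0:ℝ), ∃ ε₀ ∈ Ioc (0:ℝ) 1, ∀ ε ∈ Ioo (0:ℝ) ε₀, ∀ x ∈ L,
      |cm 0 ε x| ≤ C * ε ^ q)
    (hbd : ∀ m : ℕ, 1 ≤ m → ∃ C > (0:ℝ), ∃ ε₀ ∈ Ioc (0:ℝ) 1, ∀ ε ∈ Ioo (0:ℝ) ε₀, ∀ x ∈ L,
      |cm m ε x| ≤ C) :
    ∀ k : ℕ, 1 ≤ k →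
      ∃ C > (0:ℝ), ∃ ε₀ ∈ Ioc (0:ℝ) 1, ∀ ε ∈ Ioo (0:ℝ) ε₀, ∀ x ∈ K,
        |cm 1 ε x| ≤ C * ε ^ ((1 + r k) * q / 2) :=
  fun _ hk => IsBigOPowOn.landau_iterate hr1 hrec (fun m ε hε x hx => hd m ε hε x (hLΩ hx))
    (fun m hm => IsBigOPowOn.zero_iff.2 (hbd m hm)) hk hK hKL subset_rfl hq.le h0

/-- **Iterated Landau estimate (Lemma with the sequence `r_k`).**
Let `r 1 = 0`, `r (k+1) = (1+r k)²/4`. If `c(ε,·)` has partial derivatives `cm m` of all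
orders `m` in the `i`-th coordinate direction on `Ω` (with `cm 0 = c`),
`sup_L |c(ε,·)| = O(ε^q)` and `sup_L |∂_i^m c(ε,·)| = O(1)` for all `m ≥ 1`, then for every
`k ≥ 1`, `sup_K |∂_i c(ε,·)| = O(ε^{(1+r_k)q/2})`, where `K ⊆ interior L`, `L ⊆ Ω` compact. -/
theorem landau_iterated {s : ℕ}
    (r : ℕ → ℝ) (hr1 : r 1 = 0) (hrec : ∀ k : ℕ, 1 ≤ k → r (k + 1) = (1 + r k) ^ 2 / 4)
    (Ω : Set (Fin s → ℝ)) (hΩ : IsOpen Ω) (i : Fin s)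
    (q : ℝ) (hq : 0 < q)
    (K L : Set (Fin s → ℝ)) (hK : IsCompact K) (hL : IsCompact L)
    (hKL : K ⊆ interior L) (hLΩ : L ⊆ Ω)
    (cm : ℕ → ℝ → (Fin s → ℝ) → ℝ)
    (hd : ∀ m : ℕ, ∀ ε ∈ Ioc (0:ℝ) 1, ∀ x ∈ Ω,
      HasDerivAt (fun t => cm m ε (Function.update x i t)) (cm (m + 1) ε x) (x i))
    (h0 : ∃ C > (0:ℝ), ∃ ε₀ ∈ Ioc (0:ℝ) 1, ∀ ε ∈ Ioo (0:ℝ) ε₀, ∀ x ∈ L,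
      |cm 0 ε x| ≤ C * ε ^ q)
    (hbd : ∀ m : ℕ, 1 ≤ m → ∃ C > (0:ℝ), ∃ ε₀ ∈ Ioc (0:ℝ) 1, ∀ ε ∈ Ioo (0:ℝ) ε₀, ∀ x ∈ L,
      |cm m ε x| ≤ C) :
    ∀ k : ℕ, 1 ≤ k →
      ∃ C > (0:ℝ), ∃ ε₀ ∈ Ioc (0:ℝ) 1, ∀ ε ∈ Ioo (0:ℝ) ε₀, ∀ x ∈ K,
        |cm 1 ε x| ≤ C * ε ^ ((1 + r k) * q / 2) :=
  landau_iterated_general r hr1 hrec Ω i q hq K L hK hKL hLΩ cm hd h0 hbd
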